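/- arXiv:2102.08087 — 7 statements merged into one kernel-verified Lean document; each statement's English description precedes it below -/
import Mathlib

section
/- Let c* be the unique root of Φ(c) = λ·E[(r(X) − c·X)₊] − c. For any measurable subset 𝓔 ⊆ {x ∈ [0,C] : r(x) ≤ c*·x} of sub-profitable durations, define the modified reward r_𝓔(x) = r(x)·1(x ∉ 𝓔). Then c* is also the unique root of c ↦ λ·E[(r_𝓔(X) − c·X)₊] − c; in particular c* = λ·E[(r_𝓔(X) − c*·X)₊]. -/
open MeasureTheory Set
open scoped Classical

/-!
On a sub-profitable duration `x` we have `r x ≤ c* x` and `0 ≤ c* x`, so the integrand `(r x - c* x)₊` is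
already `0` and zeroing the reward there leaves the integral at `c*`, hence the root, unchanged.
The root is unique because `c ↦ λ E[(f - c X)₊] - c` is strictly decreasing for every reward `f`,
as `X ≥ 0`.
-/

section PositivePartIntegral

variable {Ω : Type*} [MeasurableSpace Ω] {μ : Measure Ω}

theorem antitone_integral_max_sub_mul_zero {f g : Ω → ℝ} (hg : 0 ≤ᵐ[μ] g)
    (hint : ∀ c : ℝ, Integrable (fun ω => max (f ω - c * g ω) 0) μ) :
    Antitone fun c : ℝ => ∫ ω, max (f ω - c * g ω) 0 ∂μ := by
  intro a b hab
  refine integral_mono_ae (hint b) (hint a) ?_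
  filter_upwards [hg] with ω hω
  have : a * g ω ≤ b * g ω := mul_le_mul_of_nonneg_right hab hω
  exact max_le_max (by linarith) le_rfl

theorem strictAnti_mul_integral_max_sub_mul_zero_sub {f g : Ω → ℝ} (hg : 0 ≤ᵐ[μ] g)
    (hint : ∀ c : ℝ, Integrable (fun ω => max (f ω - c * g ω) 0) μ) {lam : ℝ} (hlam : 0 ≤ lam) :
    StrictAnti fun c : ℝ => lam * ∫ ω, max (f ω - c * g ω) 0 ∂μ - c := by
  intro a b hab
  have := (antitone_integral_max_sub_mul_zero hg hint).const_mul hlam hab.le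
  dsimp only at this ⊢
  linarith

theorem integral_max_ite_zero_sub_zero {f g : Ω → ℝ} {p : Ω → Prop} [DecidablePred p]
    (h : ∀ ω, p ω → f ω ≤ g ω ∧ 0 ≤ g ω) :
    ∫ ω, max ((if p ω then 0 else f ω) - g ω) 0 ∂μ = ∫ ω, max (f ω - g ω) 0 ∂μ := by
  congr 1 with ω
  split_ifs with hp
  · obtain ⟨hfg, hg⟩ := h ω hp
    rw [max_eq_right (by linarith), max_eq_right (by linarith)]
  · rfl

end PositivePartIntegral

theorem stmt1_general {Ω : Type*} [MeasurableSpace Ω] (μ : Measure Ω)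
    (X : Ω → ℝ) (r : ℝ → ℝ) (C lam cstar : ℝ) (Eset : Set ℝ)
    (hX : ∀ᵐ ω ∂μ, 0 ≤ X ω ∧ X ω ≤ C)
    (hlam : 0 < lam)
    (hEsub : Eset ⊆ {x | x ∈ Set.Icc 0 C ∧ r x ≤ cstar * x})
    (hintE : ∀ c : ℝ,
      Integrable (fun ω => max ((if X ω ∈ Eset then 0 else r (X ω)) - c * X ω) 0) μ)
    (hcstar0 : 0 ≤ cstar)
    (hroot : lam * ∫ ω, max (r (X ω) - cstar * X ω) 0 ∂μ - cstar = 0) :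
    (cstar = lam * ∫ ω, max ((if X ω ∈ Eset then 0 else r (X ω)) - cstar * X ω) 0 ∂μ) ∧
    (∀ c : ℝ, 0 ≤ c →
      (lam * ∫ ω, max ((if X ω ∈ Eset then 0 else r (X ω)) - c * X ω) 0 ∂μ - c = 0
        ↔ c = cstar)) := by
  have hsame : ∫ ω, max ((if X ω ∈ Eset then 0 else r (X ω)) - cstar * X ω) 0 ∂μ
      = ∫ ω, max (r (X ω) - cstar * X ω) 0 ∂μ :=
    integral_max_ite_zero_sub_zero fun ω hω =>
      ⟨(hEsub hω).2, mul_nonneg hcstar0 (hEsub hω).1.1⟩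
  have hXnonneg : 0 ≤ᵐ[μ] X := hX.mono fun ω hω => hω.1
  have hanti := strictAnti_mul_integral_max_sub_mul_zero_sub hXnonneg hintE hlam.le
  have hrootE : lam * ∫ ω, max ((if X ω ∈ Eset then 0 else r (X ω)) - cstar * X ω) 0 ∂μ
      - cstar = 0 := by rw [hsame, hroot]
  refine ⟨by linarith, fun c _ => ⟨fun hc => hanti.injective (hc.trans hrootE.symm), ?_⟩⟩
  rintro rfl
  exact hrootE

/-- removing any set of sub-profitable durations from the reward does not
change the optimal profitability threshold `c*`. -/
theorem stmt1 {Ω : Type*} [MeasurableSpace Ω] (μ : Measure Ω) [IsProbabilityMeasure μ]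
    (X : Ω → ℝ) (r : ℝ → ℝ) (C D E lam cstar : ℝ) (Eset : Set ℝ)
    (hXmeas : Measurable X)
    (hX : ∀ᵐ ω ∂μ, 0 ≤ X ω ∧ X ω ≤ C)
    (hrmeas : Measurable r)
    (hr : ∀ x, E ≤ r x ∧ r x ≤ D) (hE : E ≤ 0) (hD : 0 ≤ D) (hlam : 0 < lam)
    (hEmeas : MeasurableSet Eset)
    (hEsub : Eset ⊆ {x | x ∈ Set.Icc 0 C ∧ r x ≤ cstar * x})
    (hint : ∀ c : ℝ, Integrable (fun ω => max (r (X ω) - c * X ω) 0) μ)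
    (hintE : ∀ c : ℝ,
      Integrable (fun ω => max ((if X ω ∈ Eset then 0 else r (X ω)) - c * X ω) 0) μ)
    (hcstar0 : 0 ≤ cstar)
    (hroot : lam * ∫ ω, max (r (X ω) - cstar * X ω) 0 ∂μ - cstar = 0)
    (huniq : ∀ c : ℝ, 0 ≤ c →
      lam * ∫ ω, max (r (X ω) - c * X ω) 0 ∂μ - c = 0 → c = cstar) :
    (cstar = lam * ∫ ω, max ((if X ω ∈ Eset then 0 else r (X ω)) - cstar * X ω) 0 ∂μ) ∧
    (∀ c : ℝ, 0 ≤ c →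
      (lam * ∫ ω, max ((if X ω ∈ Eset then 0 else r (X ω)) - c * X ω) 0 ∂μ - c = 0
        ↔ c = cstar)) :=
  stmt1_general μ X r C lam cstar Eset hX hlam hEsub hintE hcstar0 hroot
end

section
/- Let X₁,…,Xₙ be i.i.d. copies of X with 0 ≤ X ≤ C, r : [0,C] → [E,D], λ > 0. Let Φₙ(c) = (λ/n)·Σᵢ (r(Xᵢ) − c·Xᵢ)₊ − c and let cₙ be its unique root; let c* be the unique root of Φ(c) = λ·E[(r(X) − c·X)₊] − c. Then for every δ ∈ (0,1], P( cₙ − c* > λ(D−E)·√(ln(1/δ)/(2n)) ) ≤ δ. -/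
open MeasureTheory ProbabilityTheory Set Finset

/-!
Both `Φₙ` and `Φ` are decreasing in `c`. Fix the level `c := c* + λ t` with
`t = (D - E) √(log (1/δ) / (2n))`. If `cₙ > c`, monotonicity of `Φₙ` gives
`cₙ ≤ (λ/n) Σ (r(Xᵢ) - c Xᵢ)₊`, while monotonicity of `Φ` gives `λ E[(r(X) - c X)₊] ≤ c*`; hence
the empirical mean of the i.i.d. variables `(r(Xᵢ) - c Xᵢ)₊ ∈ [0, D - E]` exceeds its expectation
by more than `t`. Since `c` is deterministic, Hoeffding's inequality bounds the probability of
this by `exp (-2 n t² / (D - E)²) = δ`.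
-/

namespace ProbabilityTheory

variable {Ω ι : Type*} [MeasurableSpace Ω] {μ : Measure Ω} [IsProbabilityMeasure μ]
  {X : ι → Ω → ℝ} {a b : ℝ}

theorem measureReal_sum_sub_integral_ge_le_of_mem_Icc (h_indep : iIndepFun X μ)
    (h_meas : ∀ i, AEMeasurable (X i) μ) (h_bound : ∀ i, ∀ᵐ ω ∂μ, X i ω ∈ Icc a b)
    (s : Finset ι) {ε : ℝ} (hε : 0 ≤ ε) :
    μ.real {ω | ε ≤ ∑ i ∈ s, (X i ω - μ[X i])} ≤
      Real.exp (-2 * ε ^ 2 / (#s * (b - a) ^ 2)) := by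
  have h_indep' : iIndepFun (fun i ω ↦ X i ω - μ[X i]) μ :=
    h_indep.comp (fun i y ↦ y - ∫ ω, X i ω ∂μ) fun _ ↦ measurable_sub_const _
  refine (HasSubgaussianMGF.measure_sum_ge_le_of_iIndepFun h_indep'
    (fun i _ ↦ hasSubgaussianMGF_of_mem_Icc (h_meas i) (h_bound i)) hε).trans_eq ?_
  simp only [sum_const, nsmul_eq_mul, NNReal.coe_mul, NNReal.coe_natCast, NNReal.coe_pow,
    NNReal.coe_div, coe_nnnorm, Real.norm_eq_abs, sq_abs, NNReal.coe_ofNat, div_pow]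
  rw [show 2 * (#s * ((b - a) ^ 2 / 2 ^ 2)) = #s * (b - a) ^ 2 / 2 by ring, div_div_eq_mul_div]
  ring_nf

theorem measure_mean_sub_integral_gt_le_of_mem_Icc (h_indep : iIndepFun X μ)
    (h_meas : ∀ i, AEMeasurable (X i) μ) (hab : a ≤ b)
    (h_bound : ∀ i, ∀ᵐ ω ∂μ, X i ω ∈ Icc a b) {s : Finset ι} (hs : s.Nonempty) {δ : ℝ}
    (hδ₀ : 0 < δ) (hδ₁ : δ ≤ 1) :
    μ {ω | (b - a) * √(Real.log (1 / δ) / (2 * #s)) <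
        (#s : ℝ)⁻¹ * ∑ i ∈ s, (X i ω - μ[X i])} ≤ ENNReal.ofReal δ := by
  have hs₀ : (0 : ℝ) < #s := by exact_mod_cast hs.card_pos
  have hL : 0 ≤ Real.log (1 / δ) := Real.log_nonneg (one_le_one_div hδ₀ hδ₁)
  rcases hab.eq_or_lt with rfl | hab
  -- For `a = b` the Hoeffding exponent divides by zero; instead, the centred sum vanishes a.e.
  · have h_const : ∀ i, X i =ᵐ[μ] fun _ ↦ a := fun i ↦ by
      filter_upwards [h_bound i] with ω hω using by simpa using hω
    have h_int : ∀ i, μ[X i] = a := fun i ↦ by simp [integral_congr_ae (h_const i)]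
    have h_sum : ∀ᵐ ω ∂μ, ∑ i ∈ s, (X i ω - μ[X i]) = 0 := by
      filter_upwards [(Filter.eventually_all_finset s).2 fun i _ ↦ h_const i] with ω hω
      exact sum_eq_zero fun i hi ↦ by rw [hω i hi, h_int, sub_self]
    refine (measure_mono_null_ae (t := ∅) ?_ measure_empty).trans_le zero_le
    filter_upwards [h_sum] with ω hω hω'
    change _ < _ at hω'
    rw [hω] at hω'
    simp at hω'
  · set t := (b - a) * √(Real.log (1 / δ) / (2 * #s))
    have ht : 0 ≤ t := by positivity
    calc μ {ω | t < (#s : ℝ)⁻¹ * ∑ i ∈ s, (X i ω - μ[X i])}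
        ≤ μ {ω | #s * t ≤ ∑ i ∈ s, (X i ω - μ[X i])} := by
          refine measure_mono fun ω hω ↦ ?_
          simp only [mem_ofPred_eq] at hω ⊢
          rw [lt_inv_mul_iff₀ hs₀] at hω
          exact hω.le
      _ = ENNReal.ofReal (μ.real {ω | #s * t ≤ ∑ i ∈ s, (X i ω - μ[X i])}) :=
          (ofReal_measureReal).symm
      _ ≤ ENNReal.ofReal (Real.exp (-2 * (#s * t) ^ 2 / (#s * (b - a) ^ 2))) :=
          ENNReal.ofReal_le_ofReal
            (measureReal_sum_sub_integral_ge_le_of_mem_Icc h_indep h_meas h_bound s (by positivity))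
      _ = ENNReal.ofReal δ := by
          have hba : (b - a) ^ 2 ≠ 0 := by positivity
          rw [mul_pow, mul_pow, Real.sq_sqrt (by positivity)]
          have h_exponent : -2 * (#s ^ 2 * ((b - a) ^ 2 * (Real.log (1 / δ) / (2 * #s)))) /
              (#s * (b - a) ^ 2) = Real.log δ := by
            rw [one_div, Real.log_inv]
            field_simp
          rw [h_exponent, Real.exp_log hδ₀]

end ProbabilityTheory

theorem max_sub_mul_mem_Icc {x y c D E : ℝ} (hy : E ≤ y ∧ y ≤ D) (hE : E ≤ 0) (hx : 0 ≤ x)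
    (hc : 0 ≤ c) : max (y - c * x) 0 ∈ Icc 0 (D - E) :=
  ⟨le_max_right _ _, max_le (by nlinarith [mul_nonneg hc hx]) (by linarith)⟩

theorem le_mul_sum_max_sub_mul_of_le {ι : Type*} {s : Finset ι} {x y : ι → ℝ} {a c c' : ℝ}
    (ha : 0 ≤ a) (hx : ∀ i ∈ s, 0 ≤ x i) (hc : c ≤ c')
    (h_root : a * ∑ i ∈ s, max (y i - c' * x i) 0 = c') :
    c' ≤ a * ∑ i ∈ s, max (y i - c * x i) 0 :=
  calc c' = a * ∑ i ∈ s, max (y i - c' * x i) 0 := h_root.symm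
    _ ≤ a * ∑ i ∈ s, max (y i - c * x i) 0 := by
      gcongr with i hi
      exact hx i hi

theorem mul_integral_max_sub_mul_le_of_le {ν : Measure ℝ} {r : ℝ → ℝ} {a c c' : ℝ}
    (ha : 0 ≤ a) (h_nonneg : ∀ᵐ x ∂ν, 0 ≤ x)
    (h_int : ∀ c, Integrable (fun x ↦ max (r x - c * x) 0) ν) (hc : c' ≤ c)
    (h_root : a * ∫ x, max (r x - c' * x) 0 ∂ν = c') :
    a * ∫ x, max (r x - c * x) 0 ∂ν ≤ c' :=
  calc a * ∫ x, max (r x - c * x) 0 ∂ν ≤ a * ∫ x, max (r x - c' * x) 0 ∂ν := by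
        gcongr ?_ * ?_
        refine integral_mono_ae (h_int c) (h_int c') ?_
        filter_upwards [h_nonneg] with x hx
        gcongr
    _ = c' := h_root

theorem lt_mean_sub_of_lt_root_sub {ι : Type*} {s : Finset ι} (hs : s.Nonempty) {x y : ι → ℝ}
    {lam t c₀ c' m : ℝ} (hlam : 0 < lam) (hx : ∀ i ∈ s, 0 ≤ x i)
    (h_root : lam / #s * ∑ i ∈ s, max (y i - c' * x i) 0 = c') (hm : lam * m ≤ c₀)
    (h_lt : lam * t < c' - c₀) :
    t < (#s : ℝ)⁻¹ * ∑ i ∈ s, (max (y i - (c₀ + lam * t) * x i) 0 - m) := by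
  have hs₀ : (#s : ℝ) ≠ 0 := by exact_mod_cast hs.card_pos.ne'
  have h_le := le_mul_sum_max_sub_mul_of_le (div_nonneg hlam.le (#s).cast_nonneg) hx
    (c := c₀ + lam * t) (by linarith) h_root
  rw [sum_sub_distrib, sum_const, nsmul_eq_mul, mul_sub, inv_mul_cancel_left₀ hs₀,
    ← mul_lt_mul_iff_right₀ hlam]
  calc lam * t < lam / #s * ∑ i ∈ s, max (y i - (c₀ + lam * t) * x i) 0 - lam * m := by linarith
    _ = lam * ((#s : ℝ)⁻¹ * ∑ i ∈ s, max (y i - (c₀ + lam * t) * x i) 0 - m) := by ring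

theorem stmt3_general {Ω : Type*} [MeasurableSpace Ω] (μ : Measure Ω) [IsProbabilityMeasure μ]
    (ν : Measure ℝ)
    (n : ℕ) (hn : 0 < n) (Xs : Fin n → Ω → ℝ)
    (r : ℝ → ℝ) (C D E lam cstar δ : ℝ) (cn : Ω → ℝ)
    (hmeas : ∀ i, Measurable (Xs i))
    (hindep : iIndepFun Xs μ)
    (hdist : ∀ i, Measure.map (Xs i) μ = ν)
    (hsupp : ∀ᵐ x ∂ν, 0 ≤ x ∧ x ≤ C)
    (hrmeas : Measurable r)
    (hr : ∀ x, E ≤ r x ∧ r x ≤ D) (hE : E ≤ 0) (hlam : 0 < lam)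
    (hint : ∀ c : ℝ, Integrable (fun x => max (r x - c * x) 0) ν)
    (hδ : δ ∈ Set.Ioc (0:ℝ) 1)
    (hcstar0 : 0 ≤ cstar)
    (hroot : lam * ∫ x, max (r x - cstar * x) 0 ∂ν - cstar = 0)
    (hcn : ∀ ω, (lam / n) * ∑ i : Fin n, max (r (Xs i ω) - cn ω * Xs i ω) 0 - cn ω = 0) :
    μ {ω | lam * (D - E) * Real.sqrt (Real.log (1/δ) / (2 * n)) < cn ω - cstar}
      ≤ ENNReal.ofReal δ := by
  have hX_nonneg : ∀ i, ∀ᵐ ω ∂μ, 0 ≤ Xs i ω := fun i ↦ by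
    refine ae_of_ae_map (hmeas i).aemeasurable ?_
    rw [hdist i]
    filter_upwards [hsupp] with x hx using hx.1
  have hED : E ≤ D := (hr 0).1.trans (hr 0).2
  set t := (D - E) * √(Real.log (1 / δ) / (2 * n))
  set c := cstar + lam * t
  have hc : cstar ≤ c := le_add_of_nonneg_right (by positivity)
  set f : ℝ → ℝ := fun x ↦ max (r x - c * x) 0
  have hf : Measurable f := (hrmeas.sub (measurable_id.const_mul c)).max measurable_const
  have h_mean : ∀ i, μ[f ∘ Xs i] = ∫ x, f x ∂ν := fun i ↦ by
    rw [← hdist i, integral_map (hmeas i).aemeasurable hf.aestronglyMeasurable]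
    rfl
  have h_cstar : lam * ∫ x, f x ∂ν ≤ cstar :=
    mul_integral_max_sub_mul_le_of_le hlam.le (hsupp.mono fun _ hx ↦ hx.1) hint hc
      (sub_eq_zero.1 hroot)
  have h_event : ∀ᵐ ω ∂μ, lam * (D - E) * √(Real.log (1 / δ) / (2 * n)) < cn ω - cstar →
      t < (n : ℝ)⁻¹ * ∑ i, ((f ∘ Xs i) ω - μ[f ∘ Xs i]) := by
    filter_upwards [ae_all_iff.2 hX_nonneg] with ω hω h_lt
    have h_root := sub_eq_zero.1 (hcn ω)
    rw [mul_assoc] at h_lt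
    simp only [h_mean]
    have h_mean_gt := lt_mean_sub_of_lt_root_sub (s := univ) ⟨⟨0, hn⟩, mem_univ _⟩ hlam
      (fun i _ ↦ hω i) (by rwa [card_univ, Fintype.card_fin]) h_cstar h_lt
    rw [card_univ, Fintype.card_fin] at h_mean_gt
    exact h_mean_gt
  have h_bound : ∀ i, ∀ᵐ ω ∂μ, (f ∘ Xs i) ω ∈ Icc 0 (D - E) := fun i ↦ by
    filter_upwards [hX_nonneg i] with ω hω
    exact max_sub_mul_mem_Icc (hr _) hE hω (hcstar0.trans hc)
  have h_hoeffding := measure_mean_sub_integral_gt_le_of_mem_Icc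
    (hindep.comp (fun _ ↦ f) fun _ ↦ hf) (fun i ↦ (hf.comp (hmeas i)).aemeasurable)
    (sub_nonneg.2 hED) h_bound ⟨⟨0, hn⟩, mem_univ _⟩ hδ.1 hδ.2
  simp only [sub_zero, card_univ, Fintype.card_fin] at h_hoeffding
  exact (measure_mono_ae h_event).trans h_hoeffding

/-- deviation bound for the empirical profitability threshold `cₙ`. -/
theorem stmt3 {Ω : Type*} [MeasurableSpace Ω] (μ : Measure Ω) [IsProbabilityMeasure μ]
    (ν : Measure ℝ) [IsProbabilityMeasure ν]
    (n : ℕ) (hn : 0 < n) (Xs : Fin n → Ω → ℝ)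
    (r : ℝ → ℝ) (C D E lam cstar δ : ℝ) (cn : Ω → ℝ)
    (hmeas : ∀ i, Measurable (Xs i))
    (hindep : iIndepFun Xs μ)
    (hdist : ∀ i, Measure.map (Xs i) μ = ν)
    (hsupp : ∀ᵐ x ∂ν, 0 ≤ x ∧ x ≤ C)
    (hrmeas : Measurable r)
    (hr : ∀ x, E ≤ r x ∧ r x ≤ D) (hE : E ≤ 0) (hD : 0 ≤ D) (hlam : 0 < lam)
    (hint : ∀ c : ℝ, Integrable (fun x => max (r x - c * x) 0) ν)
    (hδ : δ ∈ Set.Ioc (0:ℝ) 1)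
    (hcstar0 : 0 ≤ cstar)
    (hroot : lam * ∫ x, max (r x - cstar * x) 0 ∂ν - cstar = 0)
    (hcnmeas : Measurable cn)
    (hcn : ∀ ω, (lam / n) * ∑ i : Fin n, max (r (Xs i ω) - cn ω * Xs i ω) 0 - cn ω = 0) :
    μ {ω | lam * (D - E) * Real.sqrt (Real.log (1/δ) / (2 * n)) < cn ω - cstar}
      ≤ ENNReal.ofReal δ :=
  stmt3_general μ ν n hn Xs r C D E lam cstar δ cn hmeas hindep hdist hsupp hrmeas hr hE hlam hint
    hδ hcstar0 hroot hcn
end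

section
/- For any c ≥ 0 and ε > 0, the function Φ(c) = λ·E[(r(X) − c·X)₊] − c satisfies Φ(c* + ε) ≤ −ε, where c* is the unique root of Φ. More precisely, Φ(c*+ε) ≤ −ε·(1 + λ·q_ε) where q_ε = E[X·1(r(X) ≥ (c*+ε)·X)]. -/
/-!
Replacing `c` by `c + ε` lowers `(r(X) - c X)₊` pointwise by at least `ε X` on the event
`r(X) ≥ (c + ε) X` (and never raises it, as `X ≥ 0`), so the expectation drops by at least `ε q_ε`. Since `λ E[(r - c* X)₊] = c*`, this gives `Φ(c* + ε) ≤ -ε - λ ε q_ε`, and `q_ε ≥ 0`.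
-/

open MeasureTheory Set

lemma max_sub_add_mul_ite_le {a x c ε : ℝ} (hx : 0 ≤ x) (hε : 0 ≤ ε) :
    max (a - (c + ε) * x) 0 + ε * (if (c + ε) * x ≤ a then x else 0) ≤ max (a - c * x) 0 := by
  split_ifs with h
  · rw [max_eq_left (by linarith)]
    exact le_max_of_le_left (by linarith)
  · rw [mul_zero, add_zero]
    exact max_le_max (by nlinarith) le_rfl

section

variable {Ω : Type*} [MeasurableSpace Ω] {μ : Measure Ω} {A X : Ω → ℝ} {c ε : ℝ}

lemma integral_max_sub_add_mul_integral_ite_le (hX : ∀ᵐ ω ∂μ, 0 ≤ X ω) (hε : 0 ≤ ε)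
    (hint : ∀ c : ℝ, Integrable (fun ω => max (A ω - c * X ω) 0) μ)
    (hintq : Integrable (fun ω => if (c + ε) * X ω ≤ A ω then X ω else 0) μ) :
    ∫ ω, max (A ω - (c + ε) * X ω) 0 ∂μ
        + ε * ∫ ω, (if (c + ε) * X ω ≤ A ω then X ω else 0) ∂μ
      ≤ ∫ ω, max (A ω - c * X ω) 0 ∂μ := by
  rw [← integral_const_mul, ← integral_add (hint _) (hintq.const_mul ε)]
  refine integral_mono_ae ((hint _).add (hintq.const_mul ε)) (hint _) ?_
  filter_upwards [hX] with ω hω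
  exact max_sub_add_mul_ite_le hω hε

lemma integral_ite_nonneg (hX : ∀ᵐ ω ∂μ, 0 ≤ X ω) :
    0 ≤ ∫ ω, (if (c + ε) * X ω ≤ A ω then X ω else 0) ∂μ := by
  refine integral_nonneg_of_ae ?_
  filter_upwards [hX] with ω hω
  split_ifs <;> simp [hω]

end

theorem stmt4_general {Ω : Type*} [MeasurableSpace Ω] (μ : Measure Ω)
    (X : Ω → ℝ) (r : ℝ → ℝ) (C lam cstar ε : ℝ)
    (hX : ∀ᵐ ω ∂μ, 0 ≤ X ω ∧ X ω ≤ C)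
    (hlam : 0 < lam) (hε : 0 < ε)
    (hint : ∀ c : ℝ, Integrable (fun ω => max (r (X ω) - c * X ω) 0) μ)
    (hintq : Integrable (fun ω => if (cstar + ε) * X ω ≤ r (X ω) then X ω else 0) μ)
    (hroot : lam * ∫ ω, max (r (X ω) - cstar * X ω) 0 ∂μ - cstar = 0) :
    lam * ∫ ω, max (r (X ω) - (cstar + ε) * X ω) 0 ∂μ - (cstar + ε)
      ≤ -ε * (1 + lam * ∫ ω, (if (cstar + ε) * X ω ≤ r (X ω) then X ω else 0) ∂μ) ∧
    lam * ∫ ω, max (r (X ω) - (cstar + ε) * X ω) 0 ∂μ - (cstar + ε) ≤ -ε := by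
  have hX0 : ∀ᵐ ω ∂μ, 0 ≤ X ω := hX.mono fun _ h => h.1
  have hdrop := mul_le_mul_of_nonneg_left
    (integral_max_sub_add_mul_integral_ite_le hX0 hε.le hint hintq) hlam.le
  have hq := integral_ite_nonneg (A := fun ω => r (X ω)) (c := cstar) (ε := ε) hX0
  constructor
  · linarith
  · nlinarith [mul_nonneg (mul_nonneg hlam.le hε.le) hq]

/-- `Φ(c*+ε) ≤ −ε·(1 + λ·q_ε) ≤ −ε`, where `q_ε = E[X·1(r(X) ≥ (c*+ε)X)]`. -/
theorem stmt4 {Ω : Type*} [MeasurableSpace Ω] (μ : Measure Ω) [IsProbabilityMeasure μ]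
    (X : Ω → ℝ) (r : ℝ → ℝ) (C D E lam cstar ε : ℝ)
    (hXmeas : Measurable X)
    (hX : ∀ᵐ ω ∂μ, 0 ≤ X ω ∧ X ω ≤ C)
    (hrmeas : Measurable r)
    (hr : ∀ x, E ≤ r x ∧ r x ≤ D) (hlam : 0 < lam) (hε : 0 < ε)
    (hint : ∀ c : ℝ, Integrable (fun ω => max (r (X ω) - c * X ω) 0) μ)
    (hintq : Integrable (fun ω => if (cstar + ε) * X ω ≤ r (X ω) then X ω else 0) μ)
    (hcstar0 : 0 ≤ cstar)
    (hroot : lam * ∫ ω, max (r (X ω) - cstar * X ω) 0 ∂μ - cstar = 0) :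
    lam * ∫ ω, max (r (X ω) - (cstar + ε) * X ω) 0 ∂μ - (cstar + ε)
      ≤ -ε * (1 + lam * ∫ ω, (if (cstar + ε) * X ω ≤ r (X ω) then X ω else 0) ∂μ) ∧
    lam * ∫ ω, max (r (X ω) - (cstar + ε) * X ω) 0 ∂μ - (cstar + ε) ≤ -ε :=
  stmt4_general μ X r C lam cstar ε hX hlam hε hint hintq hroot
end

section
/- Let Z be a Poisson random variable with parameter μ > 0. Then E[(Z − 2μ)₊] ≤ 4. -/
/-! The positive part is dominated by the exponential, `(x)₊ ≤ eˣ`, so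
`E[(Z − 2μ)₊] ≤ e^{−2μ} E[e^Z] = e^{−2μ} e^{μ(e − 1)} = e^{(e − 3)μ} ≤ 1`,
since `e < 3`. -/

open MeasureTheory ProbabilityTheory Real
open scoped NNReal Nat

namespace ProbabilityTheory

lemma hasSum_poissonMeasure_mul_exp (r : ℝ≥0) (t : ℝ) :
    HasSum (fun n : ℕ ↦ exp (-r) * r ^ n / n ! * exp (t * n)) (exp (r * (exp t - 1))) := by
  convert! (NormedSpace.expSeries_div_hasSum_exp ((r : ℝ) * exp t)).mul_left (exp (-r)) using 1
  · ext n
    rw [mul_comm t, exp_nat_mul, mul_pow]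
    ring
  · rw [← exp_eq_exp_ℝ, ← exp_add]
    ring_nf

lemma integrable_exp_mul_poissonMeasure (r : ℝ≥0) (t : ℝ) :
    Integrable (fun n : ℕ ↦ exp (t * n)) Po(r) := by
  rw [integrable_poissonMeasure_iff]
  simpa only [norm_of_nonneg (exp_nonneg _)] using (hasSum_poissonMeasure_mul_exp r t).summable

lemma mgf_poissonMeasure (r : ℝ≥0) (t : ℝ) :
    mgf (fun n : ℕ ↦ (n : ℝ)) Po(r) t = exp (r * (exp t - 1)) := by
  rw [mgf, integral_poissonMeasure' (integrable_exp_mul_poissonMeasure r t)]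
  exact (hasSum_poissonMeasure_mul_exp r t).tsum_eq

end ProbabilityTheory

lemma max_zero_le_exp (x : ℝ) : max x 0 ≤ exp x :=
  max_le (by linarith [add_one_le_exp x]) (exp_nonneg x)

theorem stmt6_general (p : ℝ≥0) :
    ∫ n : ℕ, max ((n : ℝ) - 2 * p) 0 ∂(poissonMeasure p) ≤ 4 := by
  have he : exp 1 < 3 := by linarith [exp_one_lt_d9]
  calc ∫ n : ℕ, max ((n : ℝ) - 2 * p) 0 ∂Po(p)
      ≤ ∫ n : ℕ, exp (-(2 * p)) * exp (1 * n) ∂Po(p) := by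
        refine integral_mono_of_nonneg (.of_forall fun n ↦ le_max_right _ 0)
          ((integrable_exp_mul_poissonMeasure p 1).const_mul _) (.of_forall fun n ↦ ?_)
        dsimp only
        rw [← exp_add, neg_add_eq_sub, one_mul]
        exact max_zero_le_exp _
    _ = exp ((exp 1 - 3) * p) := by
        rw [integral_const_mul, ← mgf, mgf_poissonMeasure, ← exp_add]
        ring_nf
    _ ≤ 1 := exp_le_one_iff.mpr (mul_nonpos_of_nonpos_of_nonneg (by linarith) p.2)
    _ ≤ 4 := by norm_num

/-- if `Z ~ Poisson(μ)` then `E[(Z − 2μ)₊] ≤ 4`. -/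
theorem stmt6 (p : ℝ≥0) (hp : 0 < p) :
    ∫ n : ℕ, max ((n : ℝ) - 2 * p) 0 ∂(poissonMeasure p) ≤ 4 :=
  stmt6_general p
end

section
/- For any acceptance set A ⊆ [0,C] (measurable), the per-time reward γ_A = λ·E[r(X)·1(X ∈ A)] / (1 + λ·E[X·1(X ∈ A)]) satisfies γ_A ≤ c*, where c* is the unique root of Φ(c) = λE[(r(X) − cX)₊] − c. Moreover γ_A = c* if A ⊇ {x : r(x) > c*x} and A ∩ {x : r(x) < c*x} = ∅ (up to P_X-null sets). -/
open MeasureTheory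
open scoped Classical

/-!
Since `1 + λ E[X·1_A] > 0`, the inequality `γ_A ≤ c*` is equivalent to
`λ E[(r(X) - c* X)·1_A] ≤ c* = λ E[(r(X) - c* X)₊]`, which holds because
`(r(x) - c* x)·1_A(x) ≤ (r(x) - c* x)₊` pointwise. Under the threshold condition on `A`
the two integrands agree almost everywhere, so the inequality becomes an equality.
-/

section Ratio

variable {lam a b c M : ℝ}

theorem mul_div_one_add_mul_le_of_sub_mul_le (hlam : 0 ≤ lam) (hb : 0 ≤ b)
    (h : a - c * b ≤ M) (hM : lam * M = c) : lam * a / (1 + lam * b) ≤ c := by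
  rw [div_le_iff₀ (by positivity)]
  linarith [mul_le_mul_of_nonneg_left h hlam]

theorem mul_div_one_add_mul_eq_of_sub_mul_eq (hlam : 0 ≤ lam) (hb : 0 ≤ b)
    (h : a - c * b = M) (hM : lam * M = c) : lam * a / (1 + lam * b) = c := by
  have hden : 0 < 1 + lam * b := by positivity
  rw [div_eq_iff hden.ne']
  linear_combination lam * h + hM

end Ratio

section Indicator

variable {p : Prop} [Decidable p] {a b c : ℝ}

theorem ite_sub_mul_ite_le_max :
    (if p then a else 0) - c * (if p then b else 0) ≤ max (a - c * b) 0 := by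
  split_ifs <;> simp

theorem ite_sub_mul_ite_eq_max (hpos : c * b < a → p) (hnonneg : p → c * b ≤ a) :
    (if p then a else 0) - c * (if p then b else 0) = max (a - c * b) 0 := by
  by_cases hp : p
  · simp [hp, hnonneg hp]
  · simp only [hp, if_false, mul_zero, sub_zero]
    exact (max_eq_right (sub_nonpos.2 (not_lt.1 (mt hpos hp)))).symm

end Indicator

section Integral

variable {Ω : Type*} [MeasurableSpace Ω] {μ : Measure Ω} {p : Ω → Prop} {f g : Ω → ℝ} {c : ℝ}

theorem integral_ite_sub_mul_integral_ite
    (hf : Integrable (fun ω => if p ω then f ω else 0) μ)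
    (hg : Integrable (fun ω => if p ω then g ω else 0) μ) :
    ∫ ω, ((if p ω then f ω else 0) - c * (if p ω then g ω else 0)) ∂μ
      = (∫ ω, (if p ω then f ω else 0) ∂μ) - c * ∫ ω, (if p ω then g ω else 0) ∂μ := by
  rw [integral_sub hf (hg.const_mul c), integral_const_mul]

theorem integral_ite_sub_mul_integral_ite_le
    (hf : Integrable (fun ω => if p ω then f ω else 0) μ)
    (hg : Integrable (fun ω => if p ω then g ω else 0) μ)
    (hmax : Integrable (fun ω => max (f ω - c * g ω) 0) μ) :
    (∫ ω, (if p ω then f ω else 0) ∂μ) - c * ∫ ω, (if p ω then g ω else 0) ∂μ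
      ≤ ∫ ω, max (f ω - c * g ω) 0 ∂μ := by
  rw [← integral_ite_sub_mul_integral_ite hf hg]
  exact integral_mono (hf.sub (hg.const_mul c)) hmax fun _ => ite_sub_mul_ite_le_max

theorem integral_ite_sub_mul_integral_ite_eq
    (hf : Integrable (fun ω => if p ω then f ω else 0) μ)
    (hg : Integrable (fun ω => if p ω then g ω else 0) μ)
    (hpos : ∀ᵐ ω ∂μ, c * g ω < f ω → p ω) (hnonneg : ∀ᵐ ω ∂μ, p ω → c * g ω ≤ f ω) :
    (∫ ω, (if p ω then f ω else 0) ∂μ) - c * ∫ ω, (if p ω then g ω else 0) ∂μ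
      = ∫ ω, max (f ω - c * g ω) 0 ∂μ := by
  rw [← integral_ite_sub_mul_integral_ite hf hg]
  refine integral_congr_ae ?_
  filter_upwards [hpos, hnonneg] with ω hω₁ hω₂
  exact ite_sub_mul_ite_eq_max hω₁ hω₂

end Integral

theorem stmt14_general {Ω : Type*} [MeasurableSpace Ω] (μ : Measure Ω)
    (X : Ω → ℝ) (r : ℝ → ℝ) (C lam cstar : ℝ) (A : Set ℝ)
    (hX : ∀ᵐ ω ∂μ, 0 ≤ X ω ∧ X ω ≤ C)
    (hlam : 0 < lam)
    (hint : Integrable (fun ω => max (r (X ω) - cstar * X ω) 0) μ)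
    (hint1 : Integrable (fun ω => if X ω ∈ A then r (X ω) else 0) μ)
    (hint2 : Integrable (fun ω => if X ω ∈ A then X ω else 0) μ)
    (hroot : lam * ∫ ω, max (r (X ω) - cstar * X ω) 0 ∂μ = cstar) :
    (lam * (∫ ω, (if X ω ∈ A then r (X ω) else 0) ∂μ)
      / (1 + lam * ∫ ω, (if X ω ∈ A then X ω else 0) ∂μ) ≤ cstar) ∧
    (((∀ᵐ ω ∂μ, cstar * X ω < r (X ω) → X ω ∈ A) ∧
      (∀ᵐ ω ∂μ, X ω ∈ A → cstar * X ω ≤ r (X ω))) →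
      lam * (∫ ω, (if X ω ∈ A then r (X ω) else 0) ∂μ)
        / (1 + lam * ∫ ω, (if X ω ∈ A then X ω else 0) ∂μ) = cstar) := by
  have hIx : 0 ≤ ∫ ω, (if X ω ∈ A then X ω else 0) ∂μ := by
    refine integral_nonneg_of_ae ?_
    filter_upwards [hX] with ω hω
    split_ifs
    exacts [hω.1, le_rfl]
  refine ⟨mul_div_one_add_mul_le_of_sub_mul_le hlam.le hIx
      (integral_ite_sub_mul_integral_ite_le hint1 hint2 hint) hroot, ?_⟩
  rintro ⟨hpos, hnonneg⟩
  exact mul_div_one_add_mul_eq_of_sub_mul_eq hlam.le hIx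
    (integral_ite_sub_mul_integral_ite_eq hint1 hint2 hpos hnonneg) hroot

/-- for any measurable acceptance set `A`, the per-time reward `γ_A` is at
most `c*`, with equality when `A` contains the strictly profitable durations and avoids
the strictly sub-profitable ones (up to null sets). -/
theorem stmt14 {Ω : Type*} [MeasurableSpace Ω] (μ : Measure Ω) [IsProbabilityMeasure μ]
    (X : Ω → ℝ) (r : ℝ → ℝ) (C D E lam cstar : ℝ) (A : Set ℝ)
    (hXmeas : Measurable X)
    (hX : ∀ᵐ ω ∂μ, 0 ≤ X ω ∧ X ω ≤ C)
    (hrmeas : Measurable r)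
    (hr : ∀ x, E ≤ r x ∧ r x ≤ D) (hlam : 0 < lam)
    (hA : MeasurableSet A)
    (hint : Integrable (fun ω => max (r (X ω) - cstar * X ω) 0) μ)
    (hint1 : Integrable (fun ω => if X ω ∈ A then r (X ω) else 0) μ)
    (hint2 : Integrable (fun ω => if X ω ∈ A then X ω else 0) μ)
    (hcstar0 : 0 ≤ cstar)
    (hroot : lam * ∫ ω, max (r (X ω) - cstar * X ω) 0 ∂μ = cstar) :
    (lam * (∫ ω, (if X ω ∈ A then r (X ω) else 0) ∂μ)
      / (1 + lam * ∫ ω, (if X ω ∈ A then X ω else 0) ∂μ) ≤ cstar) ∧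
    (((∀ᵐ ω ∂μ, cstar * X ω < r (X ω) → X ω ∈ A) ∧
      (∀ᵐ ω ∂μ, X ω ∈ A → cstar * X ω ≤ r (X ω))) →
      lam * (∫ ω, (if X ω ∈ A then r (X ω) else 0) ∂μ)
        / (1 + lam * ∫ ω, (if X ω ∈ A then X ω else 0) ∂μ) = cstar) :=
  stmt14_general μ X r C lam cstar A hX hlam hint hint1 hint2 hroot
end

section
/- Let cₙ ≥ c* ≥ 0 and consider the acceptance rule 1(r(X) ≥ cₙX). Then the per-time reward γₙ = λE[r(X)·1(r(X) ≥ cₙX)] / (1 + λE[X·1(r(X) ≥ cₙX)]) satisfies (c* − γₙ)·(E[X·1(r(X) ≥ cₙX)] + 1/λ) ≤ C·(cₙ − c*)₊. More generally, for random cₙ independent of the current X, (c* − γₙ)·E[X·1(r(X) ≥ cₙX) + S] ≤ C·E[(cₙ − c*)₊] where S ~ Exp(λ) independent of X. -/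
/-!
Write `M = E[(r(X) − c*X)₊]`, `T = E[X·1(r(X) ≥ cₙX)]` and `R = E[r(X)·1(r(X) ≥ cₙX)]`.
Since `λM = c*` and `E[S] = 1/λ`, the left-hand side is
`(c* − λR/(1 + λT))(T + 1/λ) = M + c*T − R = E[(r(X) − c*X)₊ − (r(X) − c*X)·1(r(X) ≥ cₙX)]`.
The integrand vanishes unless the profitability `r(X)/X` lies between `c*` and `cₙ`, where it is
at most `(cₙ − c*)X ≤ C(cₙ − c*)`.
-/

open MeasureTheory ProbabilityTheory Set

lemma integral_id_expMeasure {r : ℝ} (hr : 0 < r) : ∫ x, x ∂expMeasure r = r⁻¹ := by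
  have hdens : ∀ x, (gammaPDF 1 r x).toReal * x = (Ioi (0 : ℝ)).indicator
      (fun x => r * (x ^ ((2 : ℝ) - 1) * Real.exp (-(r * x)))) x := by
    intro x
    rw [gammaPDF, ENNReal.toReal_ofReal (gammaPDFReal_nonneg one_pos hr x), gammaPDFReal]
    rcases lt_or_ge 0 x with hx | hx
    · norm_num [hx, hx.le]
      ring
    · simpa [not_lt.2 hx] using fun h => Or.inr (le_antisymm hx h)
  rw [expMeasure, gammaMeasure, integral_withDensity_eq_integral_toReal_smul (f := gammaPDF 1 r)
    (measurable_gammaPDFReal 1 r).ennreal_ofReal (ae_of_all _ fun _ => ENNReal.ofReal_lt_top)]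
  simp only [smul_eq_mul, hdens]
  rw [integral_indicator measurableSet_Ioi, integral_const_mul,
    Real.integral_rpow_mul_exp_neg_mul_Ioi two_pos hr, Real.Gamma_two, Real.rpow_two]
  field_simp

lemma integral_eq_inv_of_map_eq_expMeasure {Ω : Type*} [MeasurableSpace Ω] {μ : Measure Ω}
    {S : Ω → ℝ} {r : ℝ} (hr : 0 < r) (hS : μ.map S = expMeasure r) :
    ∫ ω, S ω ∂μ = r⁻¹ := by
  have : IsProbabilityMeasure (expMeasure r) := isProbabilityMeasure_expMeasure hr
  have hSae : AEMeasurable S μ := .of_map_ne_zero (hS ▸ IsProbabilityMeasure.ne_zero _)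
  rw [← integral_map (f := fun x => x) hSae aestronglyMeasurable_id, hS, integral_id_expMeasure hr]

lemma threshold_regret_le {x y c c' C : ℝ} (hx : 0 ≤ x) (hxC : x ≤ C) (hc : c' ≤ c) :
    max (y - c' * x) 0 + c' * (if c * x ≤ y then x else 0) - (if c * x ≤ y then y else 0)
      ≤ C * max (c - c') 0 := by
  have hgap : 0 ≤ C * (c - c') := mul_nonneg (hx.trans hxC) (sub_nonneg.2 hc)
  rw [max_eq_left (sub_nonneg.2 hc)]
  split_ifs with hy
  · have : c' * x ≤ c * x := mul_le_mul_of_nonneg_right hc hx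
    rw [max_eq_left (by linarith)]
    linarith
  · have : (c - c') * x ≤ (c - c') * C := mul_le_mul_of_nonneg_left hxC (sub_nonneg.2 hc)
    rw [mul_zero, add_zero, sub_zero]
    exact max_le (by linarith) hgap

lemma integral_threshold_regret_le {Ω : Type*} [MeasurableSpace Ω] {μ : Measure Ω}
    {X c : Ω → ℝ} {r : ℝ → ℝ} {C c' : ℝ}
    (hX : ∀ᵐ ω ∂μ, 0 ≤ X ω ∧ X ω ≤ C) (hc : ∀ᵐ ω ∂μ, c' ≤ c ω)
    (hmax : Integrable (fun ω => max (r (X ω) - c' * X ω) 0) μ)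
    (hx : Integrable (fun ω => if c ω * X ω ≤ r (X ω) then X ω else 0) μ)
    (hr : Integrable (fun ω => if c ω * X ω ≤ r (X ω) then r (X ω) else 0) μ)
    (hgap : Integrable (fun ω => max (c ω - c') 0) μ) :
    (∫ ω, max (r (X ω) - c' * X ω) 0 ∂μ)
        + c' * (∫ ω, (if c ω * X ω ≤ r (X ω) then X ω else 0) ∂μ)
        - ∫ ω, (if c ω * X ω ≤ r (X ω) then r (X ω) else 0) ∂μ
      ≤ C * ∫ ω, max (c ω - c') 0 ∂μ := by
  have hsum : Integrable (fun ω => max (r (X ω) - c' * X ω) 0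
      + c' * (if c ω * X ω ≤ r (X ω) then X ω else 0)) μ := hmax.add (hx.const_mul c')
  calc _ = ∫ ω, (max (r (X ω) - c' * X ω) 0 + c' * (if c ω * X ω ≤ r (X ω) then X ω else 0)
          - if c ω * X ω ≤ r (X ω) then r (X ω) else 0) ∂μ := by
        rw [integral_sub hsum hr, integral_add hmax (hx.const_mul c'), integral_const_mul]
    _ ≤ ∫ ω, C * max (c ω - c') 0 ∂μ := by
        refine integral_mono_ae (hsum.sub hr) (hgap.const_mul C) ?_
        filter_upwards [hX, hc] with ω hXω hcω
        exact threshold_regret_le hXω.1 hXω.2 hcω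
    _ = _ := integral_const_mul C _

lemma sub_div_mul_add_inv_eq {l c M R T : ℝ} (hl : 0 < l) (hT : 0 ≤ T) (hM : l * M = c) :
    (c - l * R / (1 + l * T)) * (T + l⁻¹) = M + c * T - R := by
  have : 0 < 1 + l * T := by positivity
  subst hM
  field_simp
  ring

theorem stmt15_general {Ω : Type*} [MeasurableSpace Ω] (μ : Measure Ω) [IsProbabilityMeasure μ]
    (X S cn : Ω → ℝ) (r : ℝ → ℝ) (C lam cstar : ℝ)
    (hX : ∀ᵐ ω ∂μ, 0 ≤ X ω ∧ X ω ≤ C)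
    (hlam : 0 < lam)
    (hroot : lam * ∫ ω, max (r (X ω) - cstar * X ω) 0 ∂μ = cstar)
    (hintmax : ∀ c : ℝ, Integrable (fun ω => max (r (X ω) - c * X ω) 0) μ)
    (hintr : ∀ c : ℝ, Integrable (fun ω => if c * X ω ≤ r (X ω) then r (X ω) else 0) μ)
    (hintx : ∀ c : ℝ, Integrable (fun ω => if c * X ω ≤ r (X ω) then X ω else 0) μ)
    (hintrn : Integrable (fun ω => if cn ω * X ω ≤ r (X ω) then r (X ω) else 0) μ)
    (hintxn : Integrable (fun ω => if cn ω * X ω ≤ r (X ω) then X ω else 0) μ)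
    (hintc : Integrable (fun ω => max (cn ω - cstar) 0) μ)
    (hSint : Integrable S μ)
    (hSdist : Measure.map S μ = expMeasure lam)
    (hcn : ∀ᵐ ω ∂μ, cstar ≤ cn ω) :
    (∀ c : ℝ, cstar ≤ c →
      (cstar - lam * (∫ ω, (if c * X ω ≤ r (X ω) then r (X ω) else 0) ∂μ)
          / (1 + lam * ∫ ω, (if c * X ω ≤ r (X ω) then X ω else 0) ∂μ))
        * ((∫ ω, (if c * X ω ≤ r (X ω) then X ω else 0) ∂μ) + 1 / lam)
      ≤ C * max (c - cstar) 0) ∧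
    (cstar - lam * (∫ ω, (if cn ω * X ω ≤ r (X ω) then r (X ω) else 0) ∂μ)
        / (1 + lam * ∫ ω, (if cn ω * X ω ≤ r (X ω) then X ω else 0) ∂μ))
      * (∫ ω, ((if cn ω * X ω ≤ r (X ω) then X ω else 0) + S ω) ∂μ)
    ≤ C * ∫ ω, max (cn ω - cstar) 0 ∂μ := by
  have haccepted_nonneg (c : Ω → ℝ) :
      0 ≤ ∫ ω, (if c ω * X ω ≤ r (X ω) then X ω else 0) ∂μ := by
    refine integral_nonneg_of_ae ?_
    filter_upwards [hX] with ω hω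
    split_ifs
    exacts [hω.1, le_rfl]
  constructor
  · intro c hc
    rw [one_div, sub_div_mul_add_inv_eq hlam (haccepted_nonneg fun _ => c) hroot]
    simpa using integral_threshold_regret_le (c := fun _ => c) hX (ae_of_all _ fun _ => hc)
      (hintmax cstar) (hintx c) (hintr c) (integrable_const _)
  · rw [integral_add hintxn hSint, integral_eq_inv_of_map_eq_expMeasure hlam hSdist,
      sub_div_mul_add_inv_eq hlam (haccepted_nonneg cn) hroot]
    exact integral_threshold_regret_le hX hcn (hintmax cstar) hintxn hintrn hintc

/-- the per-time reward of the plug-in policy with threshold `cₙ ≥ c*` is at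
most `C·(cₙ − c*)₊` below `c*` (after renormalization by the expected time per task),
both for a deterministic threshold and for a random threshold independent of `X`. -/
theorem stmt15 {Ω : Type*} [MeasurableSpace Ω] (μ : Measure Ω) [IsProbabilityMeasure μ]
    (X S cn : Ω → ℝ) (r : ℝ → ℝ) (C D E lam cstar : ℝ)
    (hXmeas : Measurable X) (hSmeas : Measurable S) (hcnmeas : Measurable cn)
    (hX : ∀ᵐ ω ∂μ, 0 ≤ X ω ∧ X ω ≤ C)
    (hrmeas : Measurable r)
    (hr : ∀ x, E ≤ r x ∧ r x ≤ D) (hlam : 0 < lam) (hC : 0 < C)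
    (hcstar0 : 0 ≤ cstar)
    (hroot : lam * ∫ ω, max (r (X ω) - cstar * X ω) 0 ∂μ = cstar)
    (hintmax : ∀ c : ℝ, Integrable (fun ω => max (r (X ω) - c * X ω) 0) μ)
    (hintr : ∀ c : ℝ, Integrable (fun ω => if c * X ω ≤ r (X ω) then r (X ω) else 0) μ)
    (hintx : ∀ c : ℝ, Integrable (fun ω => if c * X ω ≤ r (X ω) then X ω else 0) μ)
    (hintrn : Integrable (fun ω => if cn ω * X ω ≤ r (X ω) then r (X ω) else 0) μ)
    (hintxn : Integrable (fun ω => if cn ω * X ω ≤ r (X ω) then X ω else 0) μ)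
    (hintc : Integrable (fun ω => max (cn ω - cstar) 0) μ)
    (hSint : Integrable S μ)
    (hSdist : Measure.map S μ = expMeasure lam)
    (hScn : IndepFun S X μ)
    (hcnX : IndepFun cn X μ)
    (hcn : ∀ᵐ ω ∂μ, cstar ≤ cn ω) :
    (∀ c : ℝ, cstar ≤ c →
      (cstar - lam * (∫ ω, (if c * X ω ≤ r (X ω) then r (X ω) else 0) ∂μ)
          / (1 + lam * ∫ ω, (if c * X ω ≤ r (X ω) then X ω else 0) ∂μ))
        * ((∫ ω, (if c * X ω ≤ r (X ω) then X ω else 0) ∂μ) + 1 / lam)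
      ≤ C * max (c - cstar) 0) ∧
    (cstar - lam * (∫ ω, (if cn ω * X ω ≤ r (X ω) then r (X ω) else 0) ∂μ)
        / (1 + lam * ∫ ω, (if cn ω * X ω ≤ r (X ω) then X ω else 0) ∂μ))
      * (∫ ω, ((if cn ω * X ω ≤ r (X ω) then X ω else 0) + S ω) ∂μ)
    ≤ C * ∫ ω, max (cn ω - cstar) 0 ∂μ :=
  stmt15_general μ X S cn r C lam cstar hX hlam hroot hintmax hintr hintx hintrn hintxn hintc hSint
    hSdist hcn
end

section
/- (Sub-optimality of the threshold policy.) Let v : (−∞,T] → ℝ be the unique solution of the ODE v′(t) = −λ·E[(r(X) + v(t+X) − v(t))₊] for t < T with v(t) = 0 for t ≥ T, and let w(t) = c*(T − t) where c* is the unique root of Φ(c) = λE[(r(X) − cX)₊] − c. If 0 ≤ X ≤ C a.s., then w(t) ≤ v(t) ≤ w(t − C) for all t ∈ [0,T]; in particular 0 ≤ v(0) − c*T ≤ c*C. -/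
open MeasureTheory Set Filter Topology

/-!
The line `w(t) = c*(T - t)` solves the dynamic programming equation exactly, on all of `ℝ`:
its increments over the random time `X` are `-c* X`, so
`λ E[(r(X) + w(t + X) - w(t))₊] = λ E[(r(X) - c* X)₊] = c* = -w'(t)`.
On the terminal window `[T, T + C]`, where `v = 0`, we have `w ≤ v ≤ w(· - C)`, and a comparison
principle carries this backwards in time: wherever `η = v - w` (or `w(· - C) - v`) is smaller at
`t` than on all of `(t, t + C]`, the increments of `v` over `X` dominate (are dominated by) those
of `w`, and monotonicity of the positive part gives `η'(t) ≤ 0`.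
-/

theorem HasDerivAt.nonneg_of_eventually_le_right {f : ℝ → ℝ} {f' x : ℝ}
    (hf : HasDerivAt f f' x) (hle : ∀ᶠ s in 𝓝[>] x, f x ≤ f s) : 0 ≤ f' := by
  refine ge_of_tendsto ((hasDerivAt_iff_tendsto_slope.mp hf).mono_left (nhdsGT_le_nhdsNE x)) ?_
  filter_upwards [hle, self_mem_nhdsWithin] with s hs hxs
  rw [slope_def_field]
  exact div_nonneg (sub_nonneg.mpr hs) (sub_nonneg.mpr (le_of_lt hxs))

section Comparison

variable {η η' : ℝ → ℝ} {a b h : ℝ}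

theorem pos_on_Icc_of_deriv_neg_at_last_nonpos (hh : 0 ≤ h) (hcont : ContinuousOn η (Icc a b))
    (hderiv : ∀ t ∈ Ico a b, HasDerivAt η (η' t) t)
    (hend : ∀ s ∈ Icc b (b + h), 0 < η s)
    (hneg : ∀ t ∈ Ico a b, η t ≤ 0 → (∀ s ∈ Ioc t (t + h), 0 < η s) → η' t < 0) :
    ∀ t ∈ Icc a b, 0 < η t := by
  by_contra! hSne
  set S := {t ∈ Icc a b | η t ≤ 0}
  have hScpt : IsCompact S := isCompact_Icc.of_isClosed_subset
    (hcont.preimage_isClosed_of_isClosed isClosed_Icc isClosed_Iic) fun _ hs => hs.1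
  obtain ⟨t₀, ⟨⟨hat₀, ht₀le⟩, hηt₀⟩, ht₀max⟩ := hScpt.exists_isGreatest hSne
  have ht₀b : t₀ < b := ht₀le.lt_of_ne <| by
    rintro rfl
    exact (hend t₀ ⟨le_rfl, by linarith⟩).not_ge hηt₀
  have hafter : ∀ s ∈ Ioc t₀ (b + h), 0 < η s := by
    intro s hs
    by_cases hsb : s ≤ b
    · by_contra! hs0
      exact hs.1.not_ge (ht₀max ⟨⟨hat₀.trans hs.1.le, hsb⟩, hs0⟩)
    · exact hend s ⟨le_of_not_ge hsb, hs.2⟩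
  have hd : 0 ≤ η' t₀ := by
    refine (hderiv t₀ ⟨hat₀, ht₀b⟩).nonneg_of_eventually_le_right ?_
    filter_upwards [Ioo_mem_nhdsGT ht₀b] with s hs
    exact hηt₀.trans (hafter s ⟨hs.1, by linarith [hs.2]⟩).le
  exact (hneg t₀ ⟨hat₀, ht₀b⟩ hηt₀ fun s hs => hafter s ⟨hs.1, by linarith [hs.2]⟩).not_ge hd

/-- Tilting `η` by `ε (b + h + 1 - s)` turns the non-strict hypotheses into the strict ones of
`pos_on_Icc_of_deriv_neg_at_last_nonpos`; `ε` is chosen to make the tilted `η` vanish at `t`. -/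
theorem nonneg_on_Icc_of_deriv_nonpos_at_window_min (hh : 0 ≤ h)
    (hcont : ContinuousOn η (Icc a b)) (hderiv : ∀ t ∈ Ico a b, HasDerivAt η (η' t) t)
    (hend : ∀ s ∈ Icc b (b + h), 0 ≤ η s)
    (hmin : ∀ t ∈ Ico a b, (∀ s ∈ Ioc t (t + h), η t < η s) → η' t ≤ 0) :
    ∀ t ∈ Icc a b, 0 ≤ η t := by
  intro t ht
  by_contra! hηt
  set K := b + h + 1
  set ε := -η t / (K - t)
  have hKt : 0 < K - t := by linarith [ht.2]
  have hε : 0 < ε := div_pos (neg_pos.mpr hηt) hKt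
  have hεt : ε * (K - t) = -η t := div_mul_cancel₀ _ hKt.ne'
  have hpos := pos_on_Icc_of_deriv_neg_at_last_nonpos (η := fun s => η s + ε * (K - s))
    (η' := fun s => η' s - ε) hh ?_ ?_ ?_ ?_ t ht
  · linarith
  · exact hcont.add (by fun_prop)
  · intro s hs
    exact ((hderiv s hs).add (((hasDerivAt_id s).const_sub K).const_mul ε)).congr_deriv
      (by ring)
  · intro s hs
    exact add_pos_of_nonneg_of_pos (hend s hs) (mul_pos hε (by linarith [hs.2]))
  · intro s hs hs0 hafter
    have : η' s ≤ 0 := hmin s hs fun u hu => by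
      nlinarith [hafter u hu, mul_pos hε (sub_pos.mpr hu.1)]
    linarith

end Comparison

section DynamicProgramming

variable {Ω : Type*} [MeasurableSpace Ω] {μ : Measure Ω} {X : Ω → ℝ} {r v : ℝ → ℝ}
  {C lam c T : ℝ}

theorem integrable_max_sub_mul_zero [IsFiniteMeasure μ] (hXmeas : Measurable X)
    (hrmeas : Measurable r) {D : ℝ} (hrD : ∀ x, r x ≤ D) (hX : ∀ᵐ ω ∂μ, 0 ≤ X ω) (hc : 0 ≤ c) :
    Integrable (fun ω => max (r (X ω) - c * X ω) 0) μ := by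
  refine Integrable.of_bound (by fun_prop) (max D 0) ?_
  filter_upwards [hX] with ω hω
  rw [Real.norm_of_nonneg (le_max_right _ _)]
  exact max_le_max (by nlinarith [hrD (X ω), mul_nonneg hc hω]) le_rfl

theorem linear_le_of_le_on_window (hC : 0 ≤ C) (hlam : 0 ≤ lam)
    (hX : ∀ᵐ ω ∂μ, 0 ≤ X ω ∧ X ω ≤ C)
    (hroot : lam * ∫ ω, max (r (X ω) - c * X ω) 0 ∂μ = c)
    (hstat : Integrable (fun ω => max (r (X ω) - c * X ω) 0) μ)
    (hint : ∀ t, Integrable (fun ω => max (r (X ω) + v (t + X ω) - v t) 0) μ)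
    (hcont : ContinuousOn v (Iic T))
    (hode : ∀ t < T, HasDerivAt v (-lam * ∫ ω, max (r (X ω) + v (t + X ω) - v t) 0 ∂μ) t)
    {K : ℝ} (hend : ∀ s ∈ Icc T (T + C), c * (K - s) ≤ v s) :
    ∀ t ≤ T, c * (K - t) ≤ v t := by
  intro t ht
  refine sub_nonneg.mp <| nonneg_on_Icc_of_deriv_nonpos_at_window_min
    (η := fun s => v s - c * (K - s))
    (η' := fun s => -lam * (∫ ω, max (r (X ω) + v (s + X ω) - v s) 0 ∂μ) + c)
    hC ?_ ?_ ?_ ?_ t ⟨le_rfl, ht⟩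
  · exact (hcont.mono Icc_subset_Iic_self).sub (by fun_prop)
  · intro s hs
    exact ((hode s hs.2).sub (((hasDerivAt_id s).const_sub K).const_mul c)).congr_deriv
      (by ring)
  · exact fun s hs => sub_nonneg.mpr (hend s hs)
  · intro s hs hmin
    have hincr : ∀ᵐ ω ∂μ, r (X ω) - c * X ω ≤ r (X ω) + v (s + X ω) - v s := by
      filter_upwards [hX] with ω ⟨hX0, hXC⟩
      rcases hX0.eq_or_lt with hX0 | hX0
      · simp [← hX0]
      · nlinarith [hmin (s + X ω) ⟨by linarith, by linarith⟩]
    have := integral_mono_ae hstat (hint s) (hincr.mono fun _ h => max_le_max h le_rfl)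
    nlinarith [mul_le_mul_of_nonneg_left this hlam]

theorem le_linear_of_le_on_window (hC : 0 ≤ C) (hlam : 0 ≤ lam)
    (hX : ∀ᵐ ω ∂μ, 0 ≤ X ω ∧ X ω ≤ C)
    (hroot : lam * ∫ ω, max (r (X ω) - c * X ω) 0 ∂μ = c)
    (hstat : Integrable (fun ω => max (r (X ω) - c * X ω) 0) μ)
    (hint : ∀ t, Integrable (fun ω => max (r (X ω) + v (t + X ω) - v t) 0) μ)
    (hcont : ContinuousOn v (Iic T))
    (hode : ∀ t < T, HasDerivAt v (-lam * ∫ ω, max (r (X ω) + v (t + X ω) - v t) 0 ∂μ) t)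
    {K : ℝ} (hend : ∀ s ∈ Icc T (T + C), v s ≤ c * (K - s)) :
    ∀ t ≤ T, v t ≤ c * (K - t) := by
  intro t ht
  refine sub_nonneg.mp <| nonneg_on_Icc_of_deriv_nonpos_at_window_min
    (η := fun s => c * (K - s) - v s)
    (η' := fun s => -c + lam * ∫ ω, max (r (X ω) + v (s + X ω) - v s) 0 ∂μ)
    hC ?_ ?_ ?_ ?_ t ⟨le_rfl, ht⟩
  · exact (Continuous.continuousOn (by fun_prop)).sub (hcont.mono Icc_subset_Iic_self)
  · intro s hs
    exact ((((hasDerivAt_id s).const_sub K).const_mul c).sub (hode s hs.2)).congr_deriv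
      (by ring)
  · exact fun s hs => sub_nonneg.mpr (hend s hs)
  · intro s hs hmin
    have hincr : ∀ᵐ ω ∂μ, r (X ω) + v (s + X ω) - v s ≤ r (X ω) - c * X ω := by
      filter_upwards [hX] with ω ⟨hX0, hXC⟩
      rcases hX0.eq_or_lt with hX0 | hX0
      · simp [← hX0]
      · nlinarith [hmin (s + X ω) ⟨by linarith, by linarith⟩]
    have := integral_mono_ae (hint s) hstat (hincr.mono fun _ h => max_le_max h le_rfl)
    nlinarith [mul_le_mul_of_nonneg_left this hlam]

end DynamicProgramming

/-- the value function `v` solving the dynamic programming ODE is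
sandwiched between `w(t) = c*(T − t)` and `w(t − C)`; in particular the threshold policy
is `c*C`-suboptimal. -/
theorem stmt19 {Ω : Type*} [MeasurableSpace Ω] (μ : Measure Ω) [IsProbabilityMeasure μ]
    (X : Ω → ℝ) (r : ℝ → ℝ) (C D E lam cstar T : ℝ) (v : ℝ → ℝ)
    (hXmeas : Measurable X)
    (hX : ∀ᵐ ω ∂μ, 0 ≤ X ω ∧ X ω ≤ C)
    (hrmeas : Measurable r)
    (hr : ∀ x, E ≤ r x ∧ r x ≤ D) (hlam : 0 < lam) (hC : 0 < C) (hT : 0 < T)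
    (hcstar0 : 0 ≤ cstar)
    (hroot : lam * ∫ ω, max (r (X ω) - cstar * X ω) 0 ∂μ = cstar)
    (hint : ∀ t : ℝ, Integrable (fun ω => max (r (X ω) + v (t + X ω) - v t) 0) μ)
    (hcont : ContinuousOn v (Set.Iic T))
    (hode : ∀ t : ℝ, t < T →
      HasDerivAt v (-lam * ∫ ω, max (r (X ω) + v (t + X ω) - v t) 0 ∂μ) t)
    (hbound : ∀ t : ℝ, T ≤ t → v t = 0) :
    (∀ t ∈ Set.Icc 0 T, cstar * (T - t) ≤ v t ∧ v t ≤ cstar * (T - (t - C))) ∧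
    0 ≤ v 0 - cstar * T ∧ v 0 - cstar * T ≤ cstar * C := by
  have hstat := integrable_max_sub_mul_zero hXmeas hrmeas (fun x => (hr x).2)
    (hX.mono fun _ h => h.1) hcstar0
  have lower := linear_le_of_le_on_window hC.le hlam.le hX hroot hstat hint hcont hode (K := T)
    fun s hs => by
      rw [hbound s hs.1]
      exact mul_nonpos_of_nonneg_of_nonpos hcstar0 (by linarith [hs.1])
  have upper := le_linear_of_le_on_window hC.le hlam.le hX hroot hstat hint hcont hode
    (K := T + C) fun s hs => by
      rw [hbound s hs.1]
      exact mul_nonneg hcstar0 (by linarith [hs.2])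
  refine ⟨fun t ht => ⟨lower t ht.2, (upper t ht.2).trans_eq (by ring)⟩, ?_, ?_⟩
  · linarith [lower 0 hT.le]
  · linarith [upper 0 hT.le]
end
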